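/- Let $a < b$, $v_0 \le b$, and $(b+v_0)/2 > a$. Define $M(\eta) = (\eta - a)(\eta - b + a - v_0)/(b-a)$ and $N(\eta) = (b-\eta)(\eta - v_0)/(b-a)$. Then $\max_{\eta \in [a,b],\, q_0, q_1 \in [0,1]} \big( M(\eta) q_0 + N(\eta) q_1 \big) = (b - v_0)^2/(4(b-a))$, attained at $\eta = (b+v_0)/2$, $q_0 = 0$, $q_1 = 1$. -/
import Mathlib


theorem stmt_7 (a b v0 : ℝ) (hab : a < b) (h1 : v0 ≤ b) (h2 : (b + v0) / 2 > a) :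
    IsGreatest {x : ℝ | ∃ η ∈ Set.Icc a b, ∃ q0 ∈ Set.Icc (0:ℝ) 1, ∃ q1 ∈ Set.Icc (0:ℝ) 1,
      x = (η - a) * (η - b + a - v0) / (b - a) * q0 + (b - η) * (η - v0) / (b - a) * q1}
      ((b - v0) ^ 2 / (4 * (b - a))) ∧
    ((b + v0) / 2 - a) * ((b + v0) / 2 - b + a - v0) / (b - a) * 0
      + (b - (b + v0) / 2) * ((b + v0) / 2 - v0) / (b - a) * 1
      = (b - v0) ^ 2 / (4 * (b - a)) := by
  have hba : (0:ℝ) < b - a := by linarith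
  have hval : ((b + v0) / 2 - a) * ((b + v0) / 2 - b + a - v0) / (b - a) * 0
      + (b - (b + v0) / 2) * ((b + v0) / 2 - v0) / (b - a) * 1
      = (b - v0) ^ 2 / (4 * (b - a)) := by
    field_simp
    ring
  refine ⟨⟨⟨(b + v0) / 2, ⟨by linarith, by linarith⟩, 0, ⟨le_refl _, by norm_num⟩,
      1, ⟨by norm_num, le_refl _⟩, hval.symm⟩, ?_⟩, hval⟩
  rintro x ⟨η, ⟨hη1, hη2⟩, q0, ⟨hq00, hq01⟩, q1, ⟨hq10, hq11⟩, rfl⟩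
  have key : (η - a) * (η - b + a - v0) * q0 + (b - η) * (η - v0) * q1
      ≤ (b - v0) ^ 2 / 4 := by
    have hQb : (b - η) * (η - v0) ≤ (b - v0) ^ 2 / 4 := by
      nlinarith [sq_nonneg (η - (b + v0) / 2)]
    rcases le_or_gt 0 ((b - η) * (η - v0)) with hQ | hQ
    · have hQq : (b - η) * (η - v0) * q1 ≤ (b - η) * (η - v0) :=
        mul_le_of_le_one_right hQ hq11
      rcases le_or_gt ((η - a) * (η - b + a - v0)) 0 with hP | hP
      · have : (η - a) * (η - b + a - v0) * q0 ≤ 0 := mul_nonpos_of_nonpos_of_nonneg hP hq00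
        linarith
      · have hPq : (η - a) * (η - b + a - v0) * q0 ≤ (η - a) * (η - b + a - v0) :=
          mul_le_of_le_one_right hP.le hq01
        have hsum : (η - a) * (η - b + a - v0) + (b - η) * (η - v0) = (a - v0) * (b - a) := by
          ring
        nlinarith [sq_nonneg (b - 2 * a + v0)]
    · -- Q < 0: since b - η ≥ 0, we get η < v0, hence P ≤ 0
      have hηv : η < v0 := by nlinarith
      have hP : (η - a) * (η - b + a - v0) ≤ 0 :=
        mul_nonpos_of_nonneg_of_nonpos (by linarith) (by linarith)
      have h3 : (η - a) * (η - b + a - v0) * q0 ≤ 0 := mul_nonpos_of_nonpos_of_nonneg hP hq00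
      have h4 : (b - η) * (η - v0) * q1 ≤ 0 := mul_nonpos_of_nonpos_of_nonneg hQ.le hq10
      nlinarith [sq_nonneg (b - v0)]
  have hrw : (η - a) * (η - b + a - v0) / (b - a) * q0 + (b - η) * (η - v0) / (b - a) * q1
      = ((η - a) * (η - b + a - v0) * q0 + (b - η) * (η - v0) * q1) / (b - a) := by
    ring
  rw [hrw, ← div_div]
  exact div_le_div_of_nonneg_right key hba.le
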